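/- Let d ≥ 2, d' ≥ 2, d'' ≥ 2 be integers, A a strictly positive d' × d matrix and A' a strictly positive d'' × d' matrix. Then D(A·A') ≤ tanh(D(A)/4) · D(A'), where D denotes the Hilbert-metric diameter of the image of the nonzero nonnegative cone. -/

import Mathlib

/-- The Hilbert projective (pseudo)metric on strictly positive vectors. -/
noncomputable def hilbertTheta {m : Type*} [Fintype m] (x x' : m → ℝ) : ℝ :=
  Real.log (sInf {μ : ℝ | 0 < μ ∧ ∀ i, x' i ≤ μ * x i} /
    sSup {l : ℝ | 0 < l ∧ ∀ i, l * x i ≤ x' i})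

/-- The Hilbert-metric diameter of the image of the nonzero nonnegative cone. -/
noncomputable def hilbertDiam {m n : Type*} [Fintype m] [Fintype n]
    (A : Matrix m n ℝ) : ℝ :=
  sSup {t : ℝ | ∃ y y' : n → ℝ, (∀ j, 0 ≤ y j) ∧ y ≠ 0 ∧ (∀ j, 0 ≤ y' j) ∧ y' ≠ 0 ∧
    t = hilbertTheta (A.mulVec y) (A.mulVec y')}

/-! Put the ratios `x' / x` between their extreme values `α ≤ β` and split `x'` along the two
nonnegative vectors `x' - α x` and `β x - x'`, with images `u`, `v` under `A`. Coordinatewise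
`A x' / A x = (β t + α) / (t + 1)` with `t = u / v`; this is monotone in `t`, and the spread of `t`
is measured by `Θ(v, u) ≤ D(A)`. What is left is a one-variable inequality for this Möbius map. -/

open Real Matrix

lemma Real.tanh_le_tanh {x y : ℝ} (h : x ≤ y) : tanh x ≤ tanh y := by
  by_contra! hlt
  have := artanh_lt_artanh (neg_one_lt_tanh y) (tanh_lt_one x) hlt
  rw [artanh_tanh, artanh_tanh] at this
  exact this.not_ge h

lemma Real.tanh_nonneg {x : ℝ} (hx : 0 ≤ x) : 0 ≤ tanh x :=
  tanh_zero ▸ tanh_le_tanh hx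

lemma Real.tanh_log_div_two {σ : ℝ} (hσ : 0 < σ) : tanh (log σ / 2) = (σ - 1) / (σ + 1) := by
  have hmem : (σ - 1) / (σ + 1) ∈ Set.Ioo (-1) 1 := by
    rw [Set.mem_Ioo, lt_div_iff₀ (by linarith), div_lt_iff₀ (by linarith)]
    constructor <;> linarith
  rw [← tanh_artanh hmem, artanh_eq_half_log (Set.Ioo_subset_Icc_self hmem)]
  congr 2
  field_simp
  ring_nf

lemma mobius_le_mobius {α β s r : ℝ} (hαβ : α ≤ β) (hs : 0 ≤ s) (hsr : s ≤ r) :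
    (β * s + α) / (s + 1) ≤ (β * r + α) / (r + 1) := by
  rw [div_le_div_iff₀ (by linarith) (by linarith)]
  nlinarith [mul_nonneg (sub_nonneg.2 hsr) (sub_nonneg.2 hαβ)]

lemma mobius_div_mobius_le_sq {x σ t : ℝ} (hx : 1 ≤ x) (hσ : 1 ≤ σ) (ht : 0 ≤ t) :
    (x ^ 2 * (σ ^ 2 * t) + 1) / (σ ^ 2 * t + 1) / ((x ^ 2 * t + 1) / (t + 1)) ≤
      ((x * σ + 1) / (x + σ)) ^ 2 := by
  rw [div_pow, div_div_div_eq, div_le_div_iff₀ (by positivity) (by positivity)]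
  nlinarith [sq_nonneg (x * σ * t - 1), sq_nonneg x, sq_nonneg σ,
    mul_nonneg (mul_nonneg (by nlinarith : (0:ℝ) ≤ x ^ 2 - 1) (by nlinarith : (0:ℝ) ≤ σ ^ 2 - 1))
      (sq_nonneg (x * σ * t - 1))]

lemma log_mul_add_one_div_add_le {x σ : ℝ} (hx : 1 ≤ x) (hσ : 1 ≤ σ) :
    log ((x * σ + 1) / (x + σ)) ≤ (σ - 1) / (σ + 1) * log x := by
  set F : ℝ → ℝ := fun y => (σ - 1) / (σ + 1) * log y + log (y + σ) - log (y * σ + 1)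
  have hF : ∀ y, 0 < y →
      HasDerivAt F ((σ - 1) / (σ + 1) * y⁻¹ + 1 / (y + σ) - σ / (y * σ + 1)) y := by
    intro y hy
    have := (((hasDerivAt_log hy.ne').const_mul ((σ - 1) / (σ + 1))).add
      (((hasDerivAt_id' y).add_const σ).log (by positivity))).sub
      ((((hasDerivAt_id' y).mul_const σ).add_const 1).log (by positivity))
    simp only [one_mul] at this
    exact this
  have hmono : MonotoneOn F (Set.Ici 1) := by
    refine monotoneOn_of_hasDerivWithinAt_nonneg (convex_Ici 1)
      (fun y hy => (hF y (by linarith [Set.mem_Ici.1 hy])).continuousAt.continuousWithinAt)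
      (fun y hy => (hF y ?_).hasDerivWithinAt) (fun y hy => ?_)
    all_goals rw [interior_Ici, Set.mem_Ioi] at hy
    · linarith
    · have hderiv : (σ - 1) / (σ + 1) * y⁻¹ + 1 / (y + σ) - σ / (y * σ + 1)
          = σ * (σ - 1) * (y - 1) ^ 2 / ((σ + 1) * y * (y + σ) * (y * σ + 1)) := by
        field_simp
        ring
      rw [hderiv]
      have : 0 ≤ σ - 1 := by linarith
      positivity
  have h := hmono Set.self_mem_Ici (Set.mem_Ici.2 hx) hx
  simp only [F, log_one, mul_zero, zero_add, one_mul, add_comm 1 σ, sub_self] at h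
  rw [log_div (by positivity) (by positivity)]
  linarith

lemma log_mobius_div_le {α β s r : ℝ} (hα : 0 < α) (hαβ : α ≤ β) (hs : 0 < s) (hsr : s ≤ r) :
    log ((β * r + α) / (r + 1) / ((β * s + α) / (s + 1))) ≤
      tanh (log (r / s) / 4) * log (β / α) := by
  have hβ0 : 0 < β := hα.trans_le hαβ
  have hr0 : 0 < r := hs.trans_le hsr
  set x := √(β / α)
  set σ := √(r / s)
  have hx : 1 ≤ x := one_le_sqrt.2 ((one_le_div hα).2 hαβ)
  have hσ : 1 ≤ σ := one_le_sqrt.2 ((one_le_div hs).2 hsr)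
  have hβ : β = α * x ^ 2 := by rw [sq_sqrt (by positivity)]; field_simp
  have hr : r = σ ^ 2 * s := by rw [sq_sqrt (by positivity)]; field_simp
  have hratio : (β * r + α) / (r + 1) / ((β * s + α) / (s + 1)) =
      (x ^ 2 * (σ ^ 2 * s) + 1) / (σ ^ 2 * s + 1) / ((x ^ 2 * s + 1) / (s + 1)) := by
    rw [hβ, hr]
    field_simp
  have hlogx : log (β / α) = 2 * log x := by
    rw [log_sqrt (by positivity)]; ring
  have hlogσ : log (r / s) / 4 = log σ / 2 := by
    rw [log_sqrt (by positivity)]; ring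
  rw [hratio, hlogx, hlogσ, tanh_log_div_two (by linarith)]
  calc log ((x ^ 2 * (σ ^ 2 * s) + 1) / (σ ^ 2 * s + 1) / ((x ^ 2 * s + 1) / (s + 1)))
      ≤ log (((x * σ + 1) / (x + σ)) ^ 2) :=
        log_le_log (by positivity) (mobius_div_mobius_le_sq hx hσ hs.le)
    _ = 2 * log ((x * σ + 1) / (x + σ)) := by rw [log_pow]; norm_num
    _ ≤ 2 * ((σ - 1) / (σ + 1) * log x) := by
        gcongr; exact log_mul_add_one_div_add_le hx hσ
    _ = (σ - 1) / (σ + 1) * (2 * log x) := by ring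

section

variable {m n : Type*} [Fintype n]

lemma Matrix.mulVec_pos {A : Matrix m n ℝ} (hA : ∀ i j, 0 < A i j) {y : n → ℝ}
    (hy : ∀ j, 0 ≤ y j) (hy0 : y ≠ 0) (i : m) : 0 < (A *ᵥ y) i := by
  obtain ⟨j, hj⟩ := Function.ne_iff.1 hy0
  exact Finset.sum_pos' (fun j _ => mul_nonneg (hA i j).le (hy j))
    ⟨j, Finset.mem_univ j, mul_pos (hA i j) ((hy j).lt_of_ne' hj)⟩

lemma Matrix.mulVec_le_mul_mulVec {A : Matrix m n ℝ} {K : ℝ} (hK : ∀ i k j, A i j ≤ K * A k j)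
    {y : n → ℝ} (hy : ∀ j, 0 ≤ y j) (i k : m) : (A *ᵥ y) i ≤ K * (A *ᵥ y) k := by
  simp only [mulVec, dotProduct, Finset.mul_sum, ← mul_assoc]
  exact Finset.sum_le_sum fun j _ => mul_le_mul_of_nonneg_right (hK i k j) (hy j)

end

variable {m n : Type*} [Fintype m] [Fintype n]

lemma Matrix.exists_forall_le_mul_of_pos [Nonempty m] [Nonempty n] {A : Matrix m n ℝ}
    (hA : ∀ i j, 0 < A i j) : ∃ K, ∀ i k j, A i j ≤ K * A k j := by
  obtain ⟨p, hp⟩ := Finite.exists_max fun p : m × n => A p.1 p.2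
  obtain ⟨q, hq⟩ := Finite.exists_min fun p : m × n => A p.1 p.2
  refine ⟨A p.1 p.2 / A q.1 q.2, fun i k j => ?_⟩
  rw [div_mul_eq_mul_div, le_div_iff₀ (hA q.1 q.2)]
  exact mul_le_mul (hp (i, j)) (hq (k, j)) (hA q.1 q.2).le (hA p.1 p.2).le

lemma hilbertTheta_eq_log_div {x x' : m → ℝ} (hx : ∀ i, 0 < x i) (hx' : ∀ i, 0 < x' i)
    {a b : m} (ha : ∀ i, x' a / x a ≤ x' i / x i) (hb : ∀ i, x' i / x i ≤ x' b / x b) :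
    hilbertTheta x x' = log ((x' b / x b) / (x' a / x a)) := by
  have hupper : {μ : ℝ | 0 < μ ∧ ∀ i, x' i ≤ μ * x i} = Set.Ici (x' b / x b) := by
    ext μ
    simp only [Set.mem_ofPred_eq, Set.mem_Ici, ← div_le_iff₀ (hx _)]
    exact ⟨fun h => h.2 b, fun h => ⟨(div_pos (hx' b) (hx b)).trans_le h, fun i => (hb i).trans h⟩⟩
  have hlower : {l : ℝ | 0 < l ∧ ∀ i, l * x i ≤ x' i} = Set.Ioc 0 (x' a / x a) := by
    ext l
    simp only [Set.mem_ofPred_eq, Set.mem_Ioc, ← le_div_iff₀ (hx _)]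
    exact ⟨fun h => ⟨h.1, h.2 a⟩, fun h => ⟨h.1, fun i => h.2.trans (ha i)⟩⟩
  rw [hilbertTheta, hupper, hlower, csInf_Ici, csSup_Ioc (div_pos (hx' a) (hx a))]

lemma hilbertTheta_nonneg [Nonempty m] {x x' : m → ℝ} (hx : ∀ i, 0 < x i)
    (hx' : ∀ i, 0 < x' i) : 0 ≤ hilbertTheta x x' := by
  obtain ⟨a, ha⟩ := Finite.exists_min fun i => x' i / x i
  obtain ⟨b, hb⟩ := Finite.exists_max fun i => x' i / x i
  rw [hilbertTheta_eq_log_div hx hx' ha hb]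
  exact log_nonneg ((one_le_div (div_pos (hx' a) (hx a))).2 (ha b))

lemma hilbertTheta_smul_self [Nonempty m] {x : m → ℝ} (hx : ∀ i, 0 < x i) {c : ℝ} (hc : 0 < c) :
    hilbertTheta x (c • x) = 0 := by
  have hcx : ∀ i, 0 < (c • x) i := fun i => smul_pos hc (hx i)
  have hratio : ∀ i, (c • x) i / x i = c := fun i => by
    rw [Pi.smul_apply, smul_eq_mul, mul_div_assoc, div_self (hx i).ne', mul_one]
  obtain ⟨a⟩ := ‹Nonempty m›
  rw [hilbertTheta_eq_log_div hx hcx (a := a) (b := a) (fun i => by rw [hratio, hratio])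
    (fun i => by rw [hratio, hratio]), div_self (div_pos (hcx a) (hx a)).ne', log_one]

lemma hilbertTheta_mulVec_le_log_sq [Nonempty m] {A : Matrix m n ℝ} (hA : ∀ i j, 0 < A i j)
    {K : ℝ} (hK : ∀ i k j, A i j ≤ K * A k j) {y y' : n → ℝ} (hy : ∀ j, 0 ≤ y j) (hy0 : y ≠ 0)
    (hy' : ∀ j, 0 ≤ y' j) (hy0' : y' ≠ 0) :
    hilbertTheta (A *ᵥ y) (A *ᵥ y') ≤ log (K ^ 2) := by
  have hu := mulVec_pos hA hy hy0
  have hu' := mulVec_pos hA hy' hy0'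
  obtain ⟨a, ha⟩ := Finite.exists_min fun i => (A *ᵥ y') i / (A *ᵥ y) i
  obtain ⟨b, hb⟩ := Finite.exists_max fun i => (A *ᵥ y') i / (A *ᵥ y) i
  rw [hilbertTheta_eq_log_div hu hu' ha hb]
  refine log_le_log (div_pos (div_pos (hu' b) (hu b)) (div_pos (hu' a) (hu a))) ?_
  rw [div_div_div_eq, div_le_iff₀ (mul_pos (hu b) (hu' a))]
  calc (A *ᵥ y') b * (A *ᵥ y) a ≤ (K * (A *ᵥ y') a) * (K * (A *ᵥ y) b) :=
        mul_le_mul (mulVec_le_mul_mulVec hK hy' b a) (mulVec_le_mul_mulVec hK hy a b)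
          (hu a).le ((hu' b).le.trans (mulVec_le_mul_mulVec hK hy' b a))
    _ = K ^ 2 * ((A *ᵥ y) b * (A *ᵥ y') a) := by ring

lemma hilbertTheta_le_hilbertDiam [Nonempty m] [Nonempty n] {A : Matrix m n ℝ}
    (hA : ∀ i j, 0 < A i j) {y y' : n → ℝ} (hy : ∀ j, 0 ≤ y j) (hy0 : y ≠ 0)
    (hy' : ∀ j, 0 ≤ y' j) (hy0' : y' ≠ 0) :
    hilbertTheta (A *ᵥ y) (A *ᵥ y') ≤ hilbertDiam A := by
  obtain ⟨K, hK⟩ := exists_forall_le_mul_of_pos hA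
  refine le_csSup ⟨log (K ^ 2), ?_⟩ ⟨y, y', hy, hy0, hy', hy0', rfl⟩
  rintro t ⟨z, z', hz, hz0, hz', hz0', rfl⟩
  exact hilbertTheta_mulVec_le_log_sq hA hK hz hz0 hz' hz0'

lemma hilbertDiam_nonneg [Nonempty m] [Nonempty n] {A : Matrix m n ℝ} (hA : ∀ i j, 0 < A i j) :
    0 ≤ hilbertDiam A := by
  have h1 : ∀ j, (0 : ℝ) ≤ (1 : n → ℝ) j := fun _ => zero_le_one
  exact (hilbertTheta_nonneg (mulVec_pos hA h1 one_ne_zero)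
    (mulVec_pos hA h1 one_ne_zero)).trans
    (hilbertTheta_le_hilbertDiam hA h1 one_ne_zero h1 one_ne_zero)

lemma hilbertDiam_le [Nonempty n] {A : Matrix m n ℝ} {c : ℝ}
    (h : ∀ y y' : n → ℝ, (∀ j, 0 ≤ y j) → y ≠ 0 → (∀ j, 0 ≤ y' j) → y' ≠ 0 →
      hilbertTheta (A *ᵥ y) (A *ᵥ y') ≤ c) :
    hilbertDiam A ≤ c := by
  refine csSup_le ⟨_, 1, 1, fun _ => zero_le_one, one_ne_zero, fun _ => zero_le_one, one_ne_zero,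
    rfl⟩ ?_
  rintro t ⟨y, y', hy, hy0, hy', hy0', rfl⟩
  exact h y y' hy hy0 hy' hy0'

lemma hilbertTheta_le_tanh_mul_log_of_decomp [Nonempty m] {p q u v : m → ℝ} {α β c : ℝ}
    (hα : 0 < α) (hαβ : α ≤ β) (hc : 0 < c) (hu : ∀ i, 0 < u i) (hv : ∀ i, 0 < v i)
    (hp : ∀ i, c * p i = u i + v i) (hq : ∀ i, c * q i = β * u i + α * v i) :
    hilbertTheta p q ≤ tanh (hilbertTheta v u / 4) * log (β / α) := by
  set t : m → ℝ := fun i => u i / v i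
  have ht : ∀ i, 0 < t i := fun i => div_pos (hu i) (hv i)
  have hp0 : ∀ i, 0 < p i := fun i => pos_of_mul_pos_right (hp i ▸ add_pos (hu i) (hv i)) hc.le
  have hq0 : ∀ i, 0 < q i := fun i =>
    pos_of_mul_pos_right (hq i ▸ add_pos (mul_pos (hα.trans_le hαβ) (hu i)) (mul_pos hα (hv i)))
      hc.le
  have hqp : ∀ i, q i / p i = (β * t i + α) / (t i + 1) := fun i => by
    have := hv i
    rw [← mul_div_mul_left (q i) (p i) hc.ne', hp, hq]
    simp only [t]
    field_simp
  obtain ⟨a, ha⟩ := Finite.exists_min t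
  obtain ⟨b, hb⟩ := Finite.exists_max t
  rw [hilbertTheta_eq_log_div hv hu ha hb, hilbertTheta_eq_log_div hp0 hq0 (a := a) (b := b)
    (fun i => by rw [hqp, hqp]; exact mobius_le_mobius hαβ (ht a).le (ha i))
    (fun i => by rw [hqp, hqp]; exact mobius_le_mobius hαβ (ht i).le (hb i)), hqp a, hqp b]
  exact log_mobius_div_le hα hαβ (ht a) (ha b)

theorem hilbertTheta_mulVec_le_tanh_mul [Nonempty m] [Nonempty n] {A : Matrix m n ℝ}
    (hA : ∀ i j, 0 < A i j) {Δ : ℝ}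
    (hΔ : ∀ y y' : n → ℝ, (∀ j, 0 ≤ y j) → y ≠ 0 → (∀ j, 0 ≤ y' j) → y' ≠ 0 →
      hilbertTheta (A *ᵥ y) (A *ᵥ y') ≤ Δ)
    {x x' : n → ℝ} (hx : ∀ j, 0 < x j) (hx' : ∀ j, 0 < x' j) :
    hilbertTheta (A *ᵥ x) (A *ᵥ x') ≤ tanh (Δ / 4) * hilbertTheta x x' := by
  obtain ⟨a, ha⟩ := Finite.exists_min fun j => x' j / x j
  obtain ⟨b, hb⟩ := Finite.exists_max fun j => x' j / x j
  rw [hilbertTheta_eq_log_div hx hx' ha hb]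
  set α := x' a / x a
  set β := x' b / x b
  have hα : 0 < α := div_pos (hx' a) (hx a)
  have hαx : ∀ j, α * x j ≤ x' j := fun j => (le_div_iff₀ (hx j)).1 (ha j)
  have hβx : ∀ j, x' j ≤ β * x j := fun j => (div_le_iff₀ (hx j)).1 (hb j)
  have hAx : ∀ i, 0 < (A *ᵥ x) i :=
    mulVec_pos hA (fun j => (hx j).le) fun h => (hx b).ne' (congrFun h b)
  rcases (show α ≤ β from ha b).eq_or_lt with hαβ | hαβ
  · have hx'x : x' = α • x := funext fun j => le_antisymm (hαβ ▸ hβx j) (hαx j)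
    rw [← hαβ, div_self hα.ne', log_one, mul_zero, hx'x, mulVec_smul,
      hilbertTheta_smul_self hAx hα]
  · set w := x' - α • x
    set z := β • x - x'
    have hw : ∀ j, 0 ≤ w j := fun j => sub_nonneg.2 (hαx j)
    have hz : ∀ j, 0 ≤ z j := fun j => sub_nonneg.2 (hβx j)
    have hw0 : w ≠ 0 := fun h => (sub_pos.2 ((lt_div_iff₀ (hx b)).1 hαβ)).ne' (congrFun h b)
    have hz0 : z ≠ 0 := fun h => (sub_pos.2 ((div_lt_iff₀ (hx a)).1 hαβ)).ne' (congrFun h a)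
    refine (hilbertTheta_le_tanh_mul_log_of_decomp hα hαβ.le (sub_pos.2 hαβ)
      (mulVec_pos hA hw hw0) (mulVec_pos hA hz hz0) (fun i => ?_) (fun i => ?_)).trans ?_
    · simp only [w, z, mulVec_sub, mulVec_smul, Pi.sub_apply, Pi.smul_apply, smul_eq_mul]
      ring
    · simp only [w, z, mulVec_sub, mulVec_smul, Pi.sub_apply, Pi.smul_apply, smul_eq_mul]
      ring
    · exact mul_le_mul_of_nonneg_right (tanh_le_tanh (by linarith [hΔ z w hz hz0 hw hw0]))
        (log_nonneg ((one_le_div hα).2 hαβ.le))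

theorem stmt_11 (d d' d'' : ℕ) (hd : 2 ≤ d) (hd' : 2 ≤ d') (hd'' : 2 ≤ d'')
    (A : Matrix (Fin d) (Fin d') ℝ) (A' : Matrix (Fin d') (Fin d'') ℝ)
    (hA : ∀ i j, 0 < A i j) (hA' : ∀ i j, 0 < A' i j) :
    hilbertDiam (A * A') ≤ Real.tanh (hilbertDiam A / 4) * hilbertDiam A' := by
  have : Nonempty (Fin d) := ⟨⟨0, by omega⟩⟩
  have : Nonempty (Fin d') := ⟨⟨0, by omega⟩⟩
  have : Nonempty (Fin d'') := ⟨⟨0, by omega⟩⟩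
  refine hilbertDiam_le fun y y' hy hy0 hy' hy0' => ?_
  rw [← mulVec_mulVec, ← mulVec_mulVec]
  calc hilbertTheta (A *ᵥ (A' *ᵥ y)) (A *ᵥ (A' *ᵥ y'))
      ≤ tanh (hilbertDiam A / 4) * hilbertTheta (A' *ᵥ y) (A' *ᵥ y') :=
        hilbertTheta_mulVec_le_tanh_mul hA
          (fun _ _ hz hz0 hz' hz0' => hilbertTheta_le_hilbertDiam hA hz hz0 hz' hz0')
          (mulVec_pos hA' hy hy0) (mulVec_pos hA' hy' hy0')
    _ ≤ tanh (hilbertDiam A / 4) * hilbertDiam A' :=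
        mul_le_mul_of_nonneg_left (hilbertTheta_le_hilbertDiam hA' hy hy0 hy' hy0')
          (tanh_nonneg (by linarith [hilbertDiam_nonneg hA]))
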